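/- For every λ ∈ [−2, 2], the logarithmic potential of the Wigner semicircle law satisfies ∫_{−2}^{2} log|λ − s| · (1/(2π))√(4 − s²) ds = λ²/4 − 1/2. -/

import Mathlib

/-!
Substituting `s = 2 cos θ` and writing `λ = 2 cos φ` turns the integral into
`(2/π) ∫₀^π log |2 cos φ - 2 cos θ| sin² θ dθ`. Since
`|2 cos φ - 2 cos θ| = |1 - e^{i(θ-φ)}| · |1 - e^{i(θ+φ)}|`, the logarithm has the Fourier series
`-∑ 2 cos (nφ) cos (nθ) / n`, and against `sin² θ = (1 - cos 2θ) / 2` only the term `n = 2`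
survives, giving `(π/4) cos 2φ = (π/4) (λ²/2 - 1)`. To integrate termwise the series is damped by
`rⁿ` (i.e. `e^{i(θ±φ)}` is replaced by `r e^{i(θ±φ)}`); the limit `r → 1⁻` is dominated
convergence, the logarithmic singularity at `θ = φ` being integrable.
-/

open Real Filter Set MeasureTheory intervalIntegral Topology

theorem abs_log_le_abs_log_add_abs_log {a b t : ℝ} (ha : 0 < a) (hat : a ≤ t) (htb : t ≤ b) :
    |log t| ≤ |log a| + |log b| := by
  have hlow := log_le_log ha hat
  have hup := log_le_log (ha.trans_le hat) htb
  rw [abs_le]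
  constructor <;> linarith [neg_abs_le (log a), le_abs_self (log b), abs_nonneg (log a),
    abs_nonneg (log b)]

namespace Complex

theorem norm_one_sub_le_two_mul_norm_one_sub_mul {w : ℂ} (hw : ‖w‖ = 1) {r : ℝ} (hr0 : 0 ≤ r)
    (hr1 : r ≤ 1) : ‖1 - w‖ ≤ 2 * ‖1 - r * w‖ := by
  have hgap : ‖(r : ℂ) * w - w‖ ≤ ‖1 - r * w‖ := by
    calc ‖(r : ℂ) * w - w‖ = 1 - r := by
          rw [← sub_one_mul, norm_mul, hw, mul_one, ← ofReal_one, ← ofReal_sub, norm_real,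
            Real.norm_of_nonpos (by linarith), neg_sub]
      _ = ‖(1 : ℂ)‖ - ‖(r : ℂ) * w‖ := by
          rw [norm_one, norm_mul, hw, mul_one, norm_real, Real.norm_of_nonneg hr0]
      _ ≤ ‖1 - r * w‖ := norm_sub_norm_le _ _
  calc ‖1 - w‖ = ‖(1 - r * w) + (r * w - w)‖ := by ring_nf
    _ ≤ ‖1 - r * w‖ + ‖(r : ℂ) * w - w‖ := norm_add_le _ _
    _ ≤ 2 * ‖1 - r * w‖ := by linarith

theorem norm_one_sub_mul_le_two {w : ℂ} (hw : ‖w‖ = 1) {r : ℝ} (hr0 : 0 ≤ r) (hr1 : r ≤ 1) :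
    ‖1 - r * w‖ ≤ 2 := by
  calc ‖1 - r * w‖ ≤ ‖(1 : ℂ)‖ + ‖(r : ℂ) * w‖ := norm_sub_le _ _
    _ ≤ 2 := by
      rw [norm_one, norm_mul, hw, mul_one, norm_real, Real.norm_of_nonneg hr0]; linarith

theorem hasSum_re_pow_div {z : ℂ} (hz : ‖z‖ < 1) :
    HasSum (fun n : ℕ => (z ^ n).re / n) (-Real.log ‖1 - z‖) := by
  simpa only [reCLM_apply, div_natCast_re, neg_re, log_re] using
    (hasSum_taylorSeries_neg_log hz).mapL reCLM

theorem re_ofReal_mul_exp_mul_I_pow (r x : ℝ) (n : ℕ) :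
    ((r * exp (x * I)) ^ n).re = r ^ n * Real.cos (n * x) := by
  rw [mul_pow, ← exp_nat_mul, ← ofReal_pow, re_ofReal_mul, ← mul_assoc, ← ofReal_natCast,
    ← ofReal_mul, exp_ofReal_mul_I_re]

theorem norm_ofReal_mul_exp_mul_I {r : ℝ} (hr0 : 0 ≤ r) (x : ℝ) : ‖(r : ℂ) * exp (x * I)‖ = r := by
  rw [norm_mul, norm_exp_ofReal_mul_I, mul_one, norm_real, Real.norm_of_nonneg hr0]

theorem hasSum_log_norm_one_sub_mul_exp {r : ℝ} (hr0 : 0 ≤ r) (hr1 : r < 1) (x : ℝ) :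
    HasSum (fun n : ℕ => r ^ n * Real.cos (n * x) / n)
      (-Real.log ‖1 - r * exp (x * I)‖) := by
  simpa only [re_ofReal_mul_exp_mul_I_pow] using
    hasSum_re_pow_div ((norm_ofReal_mul_exp_mul_I hr0 x).trans_lt hr1)

theorem norm_one_sub_exp_mul_norm_one_sub_exp (φ θ : ℝ) :
    ‖1 - exp ((θ - φ : ℝ) * I)‖ * ‖1 - exp ((θ + φ : ℝ) * I)‖
      = |2 * Real.cos φ - 2 * Real.cos θ| := by
  have hfactor : (1 - exp ((θ - φ : ℝ) * I)) * (1 - exp ((θ + φ : ℝ) * I))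
      = exp (θ * I) * ((2 * Real.cos θ - 2 * Real.cos φ : ℝ) : ℂ) := by
    push_cast
    simp only [two_cos, sub_mul, add_mul, exp_sub, exp_add, neg_mul, exp_neg]
    field_simp
    ring
  rw [← norm_mul, hfactor, norm_mul, norm_exp_ofReal_mul_I, one_mul, norm_real, Real.norm_eq_abs,
    abs_sub_comm]

end Complex

open Complex in
/-- The product of the distances from `r e^{iθ}` to `e^{iφ}` and to `e^{-iφ}`. -/
noncomputable def dampedChordProduct (φ r θ : ℝ) : ℝ :=
  ‖1 - r * exp ((θ - φ : ℝ) * I)‖ * ‖1 - r * exp ((θ + φ : ℝ) * I)‖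

theorem hasSum_log_dampedChordProduct (φ : ℝ) {r : ℝ} (hr0 : 0 ≤ r) (hr1 : r < 1) (θ : ℝ) :
    HasSum (fun n : ℕ => -(2 * r ^ n * cos (n * φ) / n) * cos (n * θ))
      (log (dampedChordProduct φ r θ)) := by
  have hne : ∀ x : ℝ, ‖1 - r * Complex.exp (x * Complex.I)‖ ≠ 0 := fun x => by
    refine norm_ne_zero_iff.mpr (sub_ne_zero.mpr fun h => ?_)
    have := congrArg norm h
    rw [norm_one, Complex.norm_ofReal_mul_exp_mul_I hr0] at this
    linarith
  have hsum := ((Complex.hasSum_log_norm_one_sub_mul_exp hr0 hr1 (θ - φ)).add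
    (Complex.hasSum_log_norm_one_sub_mul_exp hr0 hr1 (θ + φ))).neg
  have hterm : (fun n : ℕ => -(r ^ n * cos (n * (θ - φ)) / n + r ^ n * cos (n * (θ + φ)) / n))
      = fun n : ℕ => -(2 * r ^ n * cos (n * φ) / n) * cos (n * θ) := by
    funext n
    rw [mul_sub, mul_add, cos_sub, cos_add]
    ring
  rwa [hterm, neg_add, neg_neg, neg_neg, ← log_mul (hne _) (hne _)] at hsum

theorem integral_cos_int_mul_zero_pi {k : ℤ} (hk : k ≠ 0) : ∫ θ in (0 : ℝ)..π, cos (k * θ) = 0 := by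
  rw [integral_comp_mul_left cos (Int.cast_ne_zero.mpr hk), integral_cos, mul_zero, sin_zero,
    sin_int_mul_pi, sub_zero, smul_zero]

theorem integral_cos_nat_mul_mul_sin_sq {n : ℕ} (hn : n ≠ 0) :
    ∫ θ in (0 : ℝ)..π, cos (n * θ) * sin θ ^ 2 = if n = 2 then -(π / 4) else 0 := by
  have hprod : ∀ θ : ℝ, cos (n * θ) * sin θ ^ 2
      = cos (n * θ) / 2 - cos ((n + 2) * θ) / 4 - cos ((n - 2) * θ) / 4 := by
    intro θ
    rw [add_mul, sub_mul, cos_add, cos_sub, sin_sq, cos_sq θ, cos_two_mul, sin_two_mul]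
    ring
  have hcos : ∫ θ in (0 : ℝ)..π, cos (n * θ) = 0 := by
    simpa using integral_cos_int_mul_zero_pi (k := n) (by exact_mod_cast hn)
  have hcos_add : ∫ θ in (0 : ℝ)..π, cos ((n + 2) * θ) = 0 := by
    simpa using integral_cos_int_mul_zero_pi (k := n + 2) (by omega)
  rw [integral_congr fun θ _ => hprod θ, intervalIntegral.integral_sub,
    intervalIntegral.integral_sub, intervalIntegral.integral_div, intervalIntegral.integral_div,
    intervalIntegral.integral_div, hcos, hcos_add]
  · split_ifs with h2
    · subst h2
      norm_num
    · have hcos_sub : ∫ θ in (0 : ℝ)..π, cos ((n - 2) * θ) = 0 := by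
        simpa using integral_cos_int_mul_zero_pi (k := n - 2) (by omega)
      rw [hcos_sub]
      ring
  all_goals exact Continuous.intervalIntegrable (by fun_prop) _ _

theorem abs_two_mul_pow_mul_cos_div_le {r : ℝ} (hr0 : 0 ≤ r) (n : ℕ) (x : ℝ) :
    |2 * r ^ n * cos x / n| ≤ 2 * r ^ n := by
  have hnum : |2 * r ^ n * cos x| ≤ 2 * r ^ n := by
    rw [abs_mul, abs_of_nonneg (by positivity)]
    exact mul_le_of_le_one_right (by positivity) (abs_cos_le_one x)
  rcases Nat.eq_zero_or_pos n with rfl | hn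
  · simp
  · rw [abs_div, Nat.abs_cast]
    exact (div_le_self (abs_nonneg _) (by exact_mod_cast hn)).trans hnum

theorem integral_log_dampedChordProduct_mul_sin_sq (φ : ℝ) {r : ℝ} (hr0 : 0 ≤ r) (hr1 : r < 1) :
    ∫ θ in (0 : ℝ)..π, log (dampedChordProduct φ r θ) * sin θ ^ 2
      = π / 4 * r ^ 2 * cos (2 * φ) := by
  set c : ℕ → ℝ := fun n => -(2 * r ^ n * cos (n * φ) / n) with hc
  have hterm : ∀ n : ℕ, ∫ θ in (0 : ℝ)..π, c n * cos (n * θ) * sin θ ^ 2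
      = if n = 2 then π / 4 * r ^ 2 * cos (2 * φ) else 0 := by
    intro n
    rcases eq_or_ne n 0 with rfl | hn
    · simp [hc]
    simp_rw [mul_assoc (c n)]
    rw [intervalIntegral.integral_const_mul, integral_cos_nat_mul_mul_sin_sq hn]
    split_ifs with h2
    · subst h2; simp only [hc]; push_cast; ring
    · rw [mul_zero]
  have hbound : ∀ n : ℕ, ∀ θ : ℝ, ‖c n * cos (n * θ) * sin θ ^ 2‖ ≤ 2 * r ^ n := by
    intro n θ
    rw [norm_mul, norm_mul, norm_neg, norm_pow, Real.norm_eq_abs, Real.norm_eq_abs,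
      Real.norm_eq_abs, sq_abs]
    have htrig : |cos (n * θ)| * sin θ ^ 2 ≤ 1 :=
      mul_le_one₀ (abs_cos_le_one _) (sq_nonneg _) (sin_sq_le_one θ)
    calc |2 * r ^ n * cos (n * φ) / n| * |cos (n * θ)| * sin θ ^ 2
        = |2 * r ^ n * cos (n * φ) / n| * (|cos (n * θ)| * sin θ ^ 2) := by ring
      _ ≤ |2 * r ^ n * cos (n * φ) / n| * 1 := by gcongr
      _ ≤ 2 * r ^ n := by rw [mul_one]; exact abs_two_mul_pow_mul_cos_div_le hr0 n _
  have hsum := intervalIntegral.hasSum_integral_of_dominated_convergence (μ := volume)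
    (a := 0) (b := π) (F := fun n θ => c n * cos (n * θ) * sin θ ^ 2) (fun n _ => 2 * r ^ n)
    (fun n => (by fun_prop : Continuous _).aestronglyMeasurable)
    (fun n => ae_of_all _ fun θ _ => hbound n θ)
    (ae_of_all _ fun θ _ => (summable_geometric_of_lt_one hr0 hr1).mul_left 2)
    intervalIntegrable_const
    (ae_of_all _ fun θ _ => (hasSum_log_dampedChordProduct φ hr0 hr1 θ).mul_right _)
  simp only [hterm] at hsum
  exact hsum.unique (hasSum_ite_eq 2 _)

theorem dampedChordProduct_one (φ θ : ℝ) :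
    dampedChordProduct φ 1 θ = |2 * cos φ - 2 * cos θ| := by
  simpa [dampedChordProduct] using Complex.norm_one_sub_exp_mul_norm_one_sub_exp φ θ

theorem dampedChordProduct_le_four (φ θ : ℝ) {r : ℝ} (hr0 : 0 ≤ r) (hr1 : r ≤ 1) :
    dampedChordProduct φ r θ ≤ 4 := by
  have h := fun x : ℝ => Complex.norm_one_sub_mul_le_two (Complex.norm_exp_ofReal_mul_I x) hr0 hr1
  unfold dampedChordProduct
  nlinarith [h (θ - φ), h (θ + φ), norm_nonneg (1 - r * Complex.exp ((θ - φ : ℝ) * Complex.I))]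

theorem abs_two_mul_cos_sub_div_four_le_dampedChordProduct (φ θ : ℝ) {r : ℝ} (hr0 : 0 ≤ r)
    (hr1 : r ≤ 1) : |2 * cos φ - 2 * cos θ| / 4 ≤ dampedChordProduct φ r θ := by
  have h := fun x : ℝ =>
    Complex.norm_one_sub_le_two_mul_norm_one_sub_mul (Complex.norm_exp_ofReal_mul_I x) hr0 hr1
  rw [← Complex.norm_one_sub_exp_mul_norm_one_sub_exp, dampedChordProduct]
  nlinarith [h (θ - φ), h (θ + φ), norm_nonneg (1 - Complex.exp ((θ - φ : ℝ) * Complex.I)),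
    norm_nonneg (1 - r * Complex.exp ((θ + φ : ℝ) * Complex.I))]

theorem continuous_dampedChordProduct_left (φ θ : ℝ) :
    Continuous fun r => dampedChordProduct φ r θ := by
  unfold dampedChordProduct; fun_prop

theorem intervalIntegrable_log_abs_two_mul_cos_sub_div_four (φ a b : ℝ) :
    IntervalIntegrable (fun θ => log (|2 * cos φ - 2 * cos θ| / 4)) volume a b := by
  have h : AnalyticOnNhd ℝ (fun θ => (2 * cos φ - 2 * cos θ) / 4) (uIcc a b) := fun x _ => by
    fun_prop
  have hlog : ∀ x : ℝ, log (|x| / 4) = log (x / 4) := fun x => by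
    rw [← abs_of_pos (four_pos : (0 : ℝ) < 4), ← abs_div, log_abs, abs_of_pos four_pos]
  simpa only [Function.comp_def, hlog] using h.meromorphicOn.intervalIntegrable_log

theorem tendsto_integral_log_dampedChordProduct_mul_sin_sq {φ : ℝ} (hφ : φ ∈ Icc 0 π) :
    Tendsto (fun r => ∫ θ in (0 : ℝ)..π, log (dampedChordProduct φ r θ) * sin θ ^ 2) (𝓝[<] 1)
      (𝓝 (∫ θ in (0 : ℝ)..π, log |2 * cos φ - 2 * cos θ| * sin θ ^ 2)) := by
  have hgap : ∀ᵐ θ ∂volume, θ ∈ uIoc 0 π → 2 * cos φ - 2 * cos θ ≠ 0 := by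
    filter_upwards [measure_eq_zero_iff_ae_notMem.mp (measure_singleton φ)] with θ hθφ hθ
    rw [uIoc_of_le pi_pos.le] at hθ
    refine sub_ne_zero.mpr fun h => hθφ ?_
    exact (injOn_cos hφ (Ioc_subset_Icc_self hθ) (by linarith)).symm
  have hr : Ioo (0 : ℝ) 1 ∈ 𝓝[<] (1 : ℝ) := Ioo_mem_nhdsLT one_pos
  refine intervalIntegral.tendsto_integral_filter_of_dominated_convergence
    (fun θ => |log (|2 * cos φ - 2 * cos θ| / 4)| + |log 4|) ?_ ?_ ?_ ?_
  · refine Eventually.of_forall fun r => Measurable.aestronglyMeasurable ?_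
    unfold dampedChordProduct
    fun_prop
  · filter_upwards [hr] with r ⟨hr0, hr1⟩
    filter_upwards [hgap] with θ hθ hmem
    have hlog := abs_log_le_abs_log_add_abs_log (by positivity [hθ hmem])
      (abs_two_mul_cos_sub_div_four_le_dampedChordProduct φ θ hr0.le hr1.le)
      (dampedChordProduct_le_four φ θ hr0.le hr1.le)
    rw [norm_mul, norm_pow, Real.norm_eq_abs, Real.norm_eq_abs, sq_abs]
    calc |log (dampedChordProduct φ r θ)| * sin θ ^ 2 ≤ |log (dampedChordProduct φ r θ)| * 1 := by
          gcongr; exact sin_sq_le_one θ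
      _ ≤ _ := by rw [mul_one]; exact hlog
  · exact (intervalIntegrable_log_abs_two_mul_cos_sub_div_four φ 0 π).abs.add
      intervalIntegrable_const
  · filter_upwards [hgap] with θ hθ hmem
    have hlim := ((continuous_dampedChordProduct_left φ θ).tendsto 1).mono_left
      (nhdsWithin_le_nhds (s := Iio 1))
    rw [dampedChordProduct_one] at hlim
    exact (hlim.log (abs_ne_zero.mpr (hθ hmem))).mul_const _

theorem integral_log_abs_two_mul_cos_sub_mul_sin_sq {φ : ℝ} (hφ : φ ∈ Icc 0 π) :
    ∫ θ in (0 : ℝ)..π, log |2 * cos φ - 2 * cos θ| * sin θ ^ 2 = π / 4 * cos (2 * φ) := by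
  have hdamped : Tendsto (fun r : ℝ => π / 4 * r ^ 2 * cos (2 * φ)) (𝓝[<] 1)
      (𝓝 (π / 4 * cos (2 * φ))) := by
    have hcont : Continuous fun r : ℝ => π / 4 * r ^ 2 * cos (2 * φ) := by fun_prop
    simpa using (hcont.tendsto 1).mono_left (nhdsWithin_le_nhds (s := Iio 1))
  refine tendsto_nhds_unique (tendsto_integral_log_dampedChordProduct_mul_sin_sq hφ)
    (hdamped.congr' ?_)
  filter_upwards [Ioo_mem_nhdsLT one_pos] with r ⟨hr0, hr1⟩
  exact (integral_log_dampedChordProduct_mul_sin_sq φ hr0.le hr1).symm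

theorem integral_mul_sqrt_sq_sub_sq {R : ℝ} (hR : 0 < R) (g : ℝ → ℝ) :
    ∫ s in (-R)..R, g s * √(R ^ 2 - s ^ 2)
      = R ^ 2 * ∫ θ in (0 : ℝ)..π, g (R * cos θ) * sin θ ^ 2 := by
  have himage : (fun θ => R * cos θ) '' Icc 0 π = Icc (-R) R := by
    rw [← image_image (fun x => R * x), bijOn_cos.image_eq, image_mul_left_Icc hR.le (by norm_num)]
    simp
  have hinj : InjOn (fun θ => R * cos θ) (Icc 0 π) := fun a ha b hb h =>
    injOn_cos ha hb (mul_left_cancel₀ hR.ne' h)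
  rw [intervalIntegral.integral_of_le (by linarith), ← integral_Icc_eq_integral_Ioc, ← himage,
    integral_image_eq_integral_abs_deriv_smul measurableSet_Icc
      (fun θ _ => ((hasDerivAt_cos θ).const_mul R).hasDerivWithinAt) hinj,
    integral_Icc_eq_integral_Ioc, ← intervalIntegral.integral_of_le pi_pos.le,
    ← intervalIntegral.integral_const_mul]
  refine integral_congr fun θ hθ => ?_
  rw [uIcc_of_le pi_pos.le] at hθ
  have hsin : 0 ≤ R * sin θ := mul_nonneg hR.le (sin_nonneg_of_nonneg_of_le_pi hθ.1 hθ.2)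
  have hsqrt : √(R ^ 2 - (R * cos θ) ^ 2) = R * sin θ := by
    rw [← sqrt_sq hsin]
    congr 1
    linear_combination -R ^ 2 * sin_sq_add_cos_sq θ
  simp only [smul_eq_mul, hsqrt, mul_neg, abs_neg, abs_of_nonneg hsin]
  ring

theorem semicircle_log_potential (l : ℝ) (hl : l ∈ Set.Icc (-2 : ℝ) 2) :
    ∫ s in (-2 : ℝ)..2, Real.log |l - s| * (1 / (2 * π) * Real.sqrt (4 - s ^ 2))
      = l ^ 2 / 4 - 1 / 2 := by
  obtain ⟨φ, hφ, rfl⟩ : ∃ φ ∈ Icc 0 π, l = 2 * cos φ :=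
    ⟨arccos (l / 2), ⟨arccos_nonneg _, arccos_le_pi _⟩, by
      rw [cos_arccos (by linarith [hl.1]) (by linarith [hl.2])]; ring⟩
  have hsub := integral_mul_sqrt_sq_sub_sq two_pos fun s => log |2 * cos φ - s|
  calc ∫ s in (-2 : ℝ)..2, log |2 * cos φ - s| * (1 / (2 * π) * √(4 - s ^ 2))
      = 1 / (2 * π) * ∫ s in (-2 : ℝ)..2, log |2 * cos φ - s| * √(2 ^ 2 - s ^ 2) := by
        rw [← intervalIntegral.integral_const_mul]
        norm_num [mul_left_comm]
    _ = (2 * cos φ) ^ 2 / 4 - 1 / 2 := by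
        rw [hsub, integral_log_abs_two_mul_cos_sub_mul_sin_sq hφ, cos_two_mul]
        field_simp
        ring
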